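/- Let T be a trivalent tree in Tour(k_1,...,k_n), and let (i_1, j) with i_1 < j be the first pair that faces off in the lazy tournament of T. Then (1) i_1 equals the largest index i ∈ {c,1,...,n} with k_i = 0 (using the convention k_c = 0 and i = c if all k_1,...,k_n are positive), and (2) the laziness rule applies in this first round if and only if k_j = 1 and n ≥ 2 (First Round Lemma). -/

import Mathlib

open SimpleGraph

/-- A candidate leaf-labeled graph on vertex set `Fin V` with `L` labeled leaves. -/
structure PreTree (L V : ℕ) where
  adj : Fin V → Fin V → Bool
  symm' : ∀ u v, adj u v = adj v u
  loopless' : ∀ v, adj v v = false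
  leaf : Fin L → Fin V

def PreTree.G {L V : ℕ} (T : PreTree L V) : SimpleGraph (Fin V) where
  Adj u v := T.adj u v = true
  symm := ⟨fun u v h => by rw [T.symm']; exact h⟩
  loopless := ⟨fun v h => by rw [T.loopless' v] at h; exact Bool.noConfusion h⟩

instance {L V : ℕ} (T : PreTree L V) : DecidableRel T.G.Adj :=
  fun u v => inferInstanceAs (Decidable (T.adj u v = true))

/-- `T` is a trivalent tree with leaves labeled bijectively by `Fin L`. -/
def PreTree.IsTrivalent {L V : ℕ} (T : PreTree L V) : Prop :=
  T.G.IsTree ∧ (∀ v, T.G.degree v = 1 ∨ T.G.degree v = 3) ∧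
    Function.Injective T.leaf ∧ (∀ i, T.G.degree (T.leaf i) = 1) ∧
    (∀ v, T.G.degree v = 1 → ∃ i, T.leaf i = v)

/-- Label-preserving isomorphism of leaf-labeled graphs. -/
def PreTree.Iso {L V : ℕ} (T T' : PreTree L V) : Prop :=
  ∃ σ : Fin V ≃ Fin V, (∀ u v, T'.adj (σ u) (σ v) = T.adj u v) ∧ ∀ i, σ (T.leaf i) = T'.leaf i

/-- Leaves `a = 0` and `b = 1` share a common (internal) vertex. -/
def PreTree.ABAdj {n V : ℕ} (T : PreTree (n+3) V) : Prop :=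
  ∃ v, T.G.Adj (T.leaf 0) v ∧ T.G.Adj (T.leaf 1) v

/-- Number of isomorphism classes of leaf-labeled graphs satisfying `P`. -/
noncomputable def classCount {L V : ℕ} (P : PreTree L V → Prop) : ℕ :=
  Nat.card (Quot fun (T T' : {T : PreTree L V // P T}) => PreTree.Iso T.1 T'.1)

/-- `w` separates `x` from `y` in `G`: every walk from `x` to `y` passes through `w`. -/
def Separates {V : Type*} (G : SimpleGraph V) (w x y : V) : Prop :=
  ∀ p : G.Walk x y, w ∈ p.support

/-- The laziness rule applies: the unlabeled edge `E` is adjacent to a labeled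
edge carrying a label `u ≠ j` with `u > i`. -/
def LazyApplies {n : ℕ} (T : PreTree (n+3) (2*n+4))
    (lab : Sym2 (Fin (2*n+4)) → Option (Fin (n+3)))
    (E : Sym2 (Fin (2*n+4))) (i j : Fin (n+3)) : Prop :=
  ∃ (e : Sym2 (Fin (2*n+4))) (u : Fin (n+3)) (v : Fin (2*n+4)),
    e ∈ T.G.edgeSet ∧ v ∈ e ∧ v ∈ E ∧ e ≠ E ∧ lab e = some u ∧ u ≠ j ∧ i < u

/-- A run of the lazy tournament on a tree with `n+3` leaves (labels ordered
`a = 0 < b = 1 < c = 2 < 1 = 3 < ⋯ < n = n+2` as elements of `Fin (n+3)`).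
`lab t` is the edge labeling before round `t`; round `t` has `loser t < winner t`
on adjacent labeled edges `loserE t`, `winnerE t` sharing vertex `vtx t` with the
unlabeled edge `newE t`, the pair having the maximal smaller label, and `newE t`
gets labeled according to the laziness rule. -/
structure Run (n : ℕ) (T : PreTree (n+3) (2*n+4)) where
  lab : ℕ → Sym2 (Fin (2*n+4)) → Option (Fin (n+3))
  loser : Fin n → Fin (n+3)
  winner : Fin n → Fin (n+3)
  loserE : Fin n → Sym2 (Fin (2*n+4))
  winnerE : Fin n → Sym2 (Fin (2*n+4))
  newE : Fin n → Sym2 (Fin (2*n+4))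
  vtx : Fin n → Fin (2*n+4)
  init_leaf : ∀ (i : Fin (n+3)) (w : Fin (2*n+4)), T.G.Adj (T.leaf i) w →
    lab 0 s(T.leaf i, w) = some i
  init_other : ∀ e : Sym2 (Fin (2*n+4)), (∀ i : Fin (n+3), T.leaf i ∉ e) → lab 0 e = none
  init_nonedge : ∀ e, e ∉ T.G.edgeSet → lab 0 e = none
  lt_lw : ∀ t, loser t < winner t
  loserE_mem : ∀ t, loserE t ∈ T.G.edgeSet
  winnerE_mem : ∀ t, winnerE t ∈ T.G.edgeSet
  newE_mem : ∀ t, newE t ∈ T.G.edgeSet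
  lab_loserE : ∀ t, lab t.1 (loserE t) = some (loser t)
  lab_winnerE : ∀ t, lab t.1 (winnerE t) = some (winner t)
  vtx_mem : ∀ t, vtx t ∈ loserE t ∧ vtx t ∈ winnerE t ∧ vtx t ∈ newE t
  edges_distinct : ∀ t, loserE t ≠ winnerE t ∧ loserE t ≠ newE t ∧ winnerE t ≠ newE t
  newE_unlabeled : ∀ t, lab t.1 (newE t) = none
  max_rule : ∀ (t : Fin n) (e1 e2 e3 : Sym2 (Fin (2*n+4))) (i j : Fin (n+3)) (v : Fin (2*n+4)),
    e1 ∈ T.G.edgeSet → e2 ∈ T.G.edgeSet → e3 ∈ T.G.edgeSet →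
    lab t.1 e1 = some i → lab t.1 e2 = some j → lab t.1 e3 = none → i < j →
    v ∈ e1 → v ∈ e2 → v ∈ e3 → e1 ≠ e2 → e1 ≠ e3 → e2 ≠ e3 →
    i ≤ loser t
  step_lazy : ∀ t : Fin n, LazyApplies T (lab t.1) (newE t) (loser t) (winner t) →
    lab (t.1+1) (newE t) = some (loser t)
  step_nonlazy : ∀ t : Fin n, ¬ LazyApplies T (lab t.1) (newE t) (loser t) (winner t) →
    lab (t.1+1) (newE t) = some (winner t)
  step_frame : ∀ (t : Fin n) (e : Sym2 (Fin (2*n+4))), e ≠ newE t → lab (t.1+1) e = lab t.1 e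

/-- Number of rounds won by label `i`. -/
def Run.wins {n : ℕ} {T : PreTree (n+3) (2*n+4)} (R : Run n T) (i : Fin (n+3)) : ℕ :=
  (Finset.univ.filter fun t : Fin n => R.winner t = i).card

/-- The element of `Fin (n+3)` corresponding to the numeric label `m+1 ∈ {1,…,n}`. -/
def lbl {n : ℕ} (m : Fin n) : Fin (n+3) := ⟨(m:ℕ)+3, by omega⟩

/-- `T ∈ Tour(k₁,…,kₙ)`. -/
def InTour {n : ℕ} (k : Fin n → ℕ) (T : PreTree (n+3) (2*n+4)) : Prop :=
  T.IsTrivalent ∧ T.ABAdj ∧ ∃ R : Run n T, ∀ m : Fin n, R.wins (lbl m) = k m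

/-- `|Tour(k₁,…,kₙ)|` (isomorphism classes). -/
noncomputable def TourCount {n : ℕ} (k : Fin n → ℕ) : ℕ := classCount (InTour k)

/-- `T'` is obtained from `T` by deleting the largest leaf and suppressing
the resulting degree-2 vertex `w`. -/
def DelLast (n : ℕ) (T : PreTree ((n+1)+3) (2*(n+1)+4)) (T' : PreTree (n+3) (2*n+4)) : Prop :=
  ∃ (g : Fin (2*n+4) → Fin (2*(n+1)+4)) (w : Fin (2*(n+1)+4)),
    Function.Injective g ∧
    T.G.Adj (T.leaf (Fin.last (n+3))) w ∧
    (∀ v, v ∈ Set.range g ↔ (v ≠ T.leaf (Fin.last (n+3)) ∧ v ≠ w)) ∧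
    (∀ u u' : Fin (2*n+4), T'.G.Adj u u' ↔
      (T.G.Adj (g u) (g u') ∨ (T.G.Adj (g u) w ∧ T.G.Adj (g u') w ∧ g u ≠ g u'))) ∧
    (∀ i : Fin (n+3), g (T'.leaf i) = T.leaf (Fin.castSucc i))

/-- `T'` is obtained from `T` by successively deleting the leaves `r+1, …, n`. -/
inductive Restricts : (n : ℕ) → (r : ℕ) → PreTree (n+3) (2*n+4) → PreTree (r+3) (2*r+4) → Prop
  | refl (n : ℕ) (T : PreTree (n+3) (2*n+4)) : Restricts n n T T
  | step (n r : ℕ) (T : PreTree ((n+1)+3) (2*(n+1)+4)) (T1 : PreTree (n+3) (2*n+4))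
      (T2 : PreTree (r+3) (2*r+4)) :
      DelLast n T T1 → Restricts n r T1 T2 → Restricts (n+1) r T T2

/-- The composition `k̃_j`: decrement `k j` and delete position `dpos`
(the rightmost zero of the result). -/
def tilde {n : ℕ} (k : Fin (n+1) → ℕ) (dpos : ℕ) (j : Fin (n+1)) : Fin n → ℕ :=
  fun m => if (m:ℕ) < dpos then Function.update k j (k j - 1) (Fin.castSucc m)
           else Function.update k j (k j - 1) (Fin.succ m)

/-- The map `π_lazy` relates `T` to the pair `(j, T')` where `j` is the winner of the
first round of the tournament, the two leaves that competed are deleted (the shared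
vertex becoming a new leaf) and the labels are shifted according to the (non)lazy case. -/
def PiLazyRel (n : ℕ) (k : Fin (n+1) → ℕ) (T : PreTree ((n+1)+3) (2*(n+1)+4))
    (j : Fin (n+1)) (T' : PreTree (n+3) (2*n+4)) : Prop :=
  ∃ (R : Run (n+1) T) (g : Fin (2*n+4) → Fin (2*(n+1)+4)),
    (∀ m : Fin (n+1), R.wins (lbl m) = k m) ∧
    R.winner ⟨0, Nat.succ_pos n⟩ = lbl j ∧
    Function.Injective g ∧
    (∀ v, v ∈ Set.range g ↔
      (v ≠ T.leaf (R.loser ⟨0, Nat.succ_pos n⟩) ∧ v ≠ T.leaf (R.winner ⟨0, Nat.succ_pos n⟩))) ∧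
    (∀ u u' : Fin (2*n+4), T'.G.Adj u u' ↔ T.G.Adj (g u) (g u')) ∧
    (if k j = 1 then
      ∀ β : Fin (n+3), g (T'.leaf β) =
        (if (β:ℕ) = ((R.loser ⟨0, Nat.succ_pos n⟩) : ℕ) then R.vtx ⟨0, Nat.succ_pos n⟩
         else if (β:ℕ) < ((R.winner ⟨0, Nat.succ_pos n⟩) : ℕ) then T.leaf (Fin.castSucc β)
         else T.leaf (Fin.succ β))
     else
      ∀ β : Fin (n+3), g (T'.leaf β) =
        (if (β:ℕ) < ((R.loser ⟨0, Nat.succ_pos n⟩) : ℕ) then T.leaf (Fin.castSucc β)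
         else if (β:ℕ)+1 = ((R.winner ⟨0, Nat.succ_pos n⟩) : ℕ) then R.vtx ⟨0, Nat.succ_pos n⟩
         else T.leaf (Fin.succ β)))

/-! ### Parking functions.
A parking function of size `n` is encoded by `col : Fin n → Fin n`, where `col x` is the
(0-indexed) column of the label `x+1`; the Dyck path condition (for paths from `(0,n)` to
`(n,0)` staying weakly above the diagonal, cells left of down steps) is `IsPF`. -/

def IsPF {n : ℕ} (col : Fin n → Fin n) : Prop :=
  ∀ j : Fin n, n - (j:ℕ) ≤ (Finset.univ.filter fun x => j ≤ col x).card

/-- Dominance index of label `x+1`: the number of columns strictly to its right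
containing no entry greater than `x+1` (empty columns count). -/
def domIdx {n : ℕ} (col : Fin n → Fin n) (x : Fin n) : ℕ :=
  (Finset.univ.filter fun j : Fin n => col x < j ∧ ∀ y, col y = j → y ≤ x).card

/-- Column-restricted: `x > d_x` for all labels `x` (label `x : Fin n` has value `x+1`). -/
def ColRes {n : ℕ} (col : Fin n → Fin n) : Prop := ∀ x : Fin n, domIdx col x < (x:ℕ) + 1

/-- Number of labels in column `j`. -/
def colCount {n : ℕ} (col : Fin n → Fin n) (j : Fin n) : ℕ :=
  (Finset.univ.filter fun x => col x = j).card

/-- `col'` is the image of `col` under the map `r`: remove the row containing the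
label `1`, decrement the remaining labels, and delete the rightmost empty column `E`. -/
def RSpec {n : ℕ} (col : Fin (n+1) → Fin (n+1)) (col' : Fin n → Fin n) : Prop :=
  ∃ E : Fin (n+1),
    (∀ y : Fin (n+1), y ≠ 0 → col y ≠ E) ∧
    (∀ j : Fin (n+1), (∀ y, y ≠ 0 → col y ≠ j) → j ≤ E) ∧
    (∀ x : Fin n, (col' x : ℕ) =
      if (col (Fin.succ x) : ℕ) < (E:ℕ) then (col (Fin.succ x) : ℕ)
      else (col (Fin.succ x) : ℕ) - 1)

/-- `col` is the parking function `τ(T)`: column `col m` contains label `m+1`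
iff the label `col m + 1` wins round `m+1` of the lazy tournament of `T`. -/
def TauRel {n : ℕ} (T : PreTree (n+3) (2*n+4)) (col : Fin n → Fin n) : Prop :=
  ∃ R : Run n T, ∀ t : Fin n, ((R.winner t) : ℕ) = (col t : ℕ) + 3

/-!
Every round is played at its own internal vertex, and since only `1, …, n` win, these are exactly
the `n` internal vertices other than the one at the cherry `a, b`. The first loser `i₁` bounds every
later loser: two adjacent edges whose labels exceed all earlier losers are still leaf edges, so a
round between them could already have been played first. Hence a label other than `a, b` that
never wins, and so loses at its leaf's neighbour, is at most `i₁`; and `i₁` never wins, since a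
label wins only on its leaf edge or on an edge it inherited non-lazily. If the first round is lazy,
its winner `j` never wins again; if it is not, the new edge labeled `j` leads (for `n ≥ 2`) to
another round vertex, where `j` exceeds every loser and wins again.
-/

open Finset

namespace SimpleGraph

variable {V : Type*} {G : SimpleGraph V}

theorem exists_adj_of_mem_edgeSet {e : Sym2 V} {v : V} (he : e ∈ G.edgeSet) (hv : v ∈ e) :
    ∃ w, G.Adj v w ∧ e = s(v, w) :=
  ⟨Sym2.Mem.other hv, by rwa [← mem_edgeSet, Sym2.other_spec hv], (Sym2.other_spec hv).symm⟩

theorem Connected.mem_of_forall_adj_mem (hG : G.Connected) {S : Set V} {u : V} (hu : u ∈ S)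
    (hS : ∀ x ∈ S, ∀ y, G.Adj x y → y ∈ S) (v : V) : v ∈ S := by
  obtain ⟨p⟩ := hG u v
  induction p with
  | nil => exact hu
  | cons h _ ih => exact ih (hS _ hu _ h)

variable [Fintype V] [DecidableRel G.Adj]

theorem eq_of_adj_of_degree_eq_one {v w w' : V} (h : G.degree v = 1) (hw : G.Adj v w)
    (hw' : G.Adj v w') : w = w' :=
  (degree_eq_one_iff_existsUnique_adj.mp h).unique hw hw'

variable [DecidableEq V]

theorem eq_or_eq_or_eq_of_degree_eq_three {v a b c w : V} (h : G.degree v = 3)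
    (ha : G.Adj v a) (hb : G.Adj v b) (hc : G.Adj v c) (hab : a ≠ b) (hac : a ≠ c) (hbc : b ≠ c)
    (hw : G.Adj v w) : w = a ∨ w = b ∨ w = c := by
  have hsub : ({a, b, c} : Finset V) ⊆ G.neighborFinset v := by
    simp [Finset.insert_subset_iff, ha, hb, hc]
  have heq := Finset.eq_of_subset_of_card_le hsub (by
    rw [card_neighborFinset_eq_degree, h, Finset.card_insert_of_notMem (by simp [hab, hac]),
      Finset.card_pair hbc])
  simpa [← heq] using (G.mem_neighborFinset v w).mpr hw

/-- The neighbourhoods of `x` and `y` together form a connected component. -/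
theorem Connected.card_le_degree_add_degree (hG : G.Connected) {x y : V} (hxy : G.Adj x y)
    (hx : ∀ z, G.Adj x z → z ≠ y → G.degree z = 1) (hy : ∀ z, G.Adj y z → z ≠ x → G.degree z = 1) :
    Fintype.card V ≤ G.degree x + G.degree y := by
  have hclosed : ∀ a ∈ (↑(G.neighborFinset x ∪ G.neighborFinset y) : Set V), ∀ b, G.Adj a b →
      b ∈ (↑(G.neighborFinset x ∪ G.neighborFinset y) : Set V) := by
    intro a ha b hab
    simp only [coe_union, Set.mem_union, mem_coe, mem_neighborFinset] at ha ⊢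
    rcases ha with ha | ha
    · by_cases hay : a = y
      · exact Or.inr (hay ▸ hab)
      · exact Or.inr (eq_of_adj_of_degree_eq_one (hx a ha hay) hab ha.symm ▸ hxy.symm)
    · by_cases hax : a = x
      · exact Or.inl (hax ▸ hab)
      · exact Or.inl (eq_of_adj_of_degree_eq_one (hy a ha hax) hab ha.symm ▸ hxy)
  have huniv := eq_univ_of_forall (hG.mem_of_forall_adj_mem (u := y) (by simp [hxy]) hclosed)
  calc Fintype.card V = #(G.neighborFinset x ∪ G.neighborFinset y) := by rw [huniv, card_univ]
    _ ≤ G.degree x + G.degree y := card_union_le _ _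

end SimpleGraph

namespace PreTree.IsTrivalent

variable {L V : ℕ} {T : PreTree L V}

theorem connected (hT : T.IsTrivalent) : T.G.Connected := hT.1.connected

theorem degree_eq_one_or_three (hT : T.IsTrivalent) (v : Fin V) :
    T.G.degree v = 1 ∨ T.G.degree v = 3 :=
  hT.2.1 v

theorem leaf_injective (hT : T.IsTrivalent) : Function.Injective T.leaf := hT.2.2.1

theorem degree_leaf (hT : T.IsTrivalent) (i : Fin L) : T.G.degree (T.leaf i) = 1 := hT.2.2.2.1 i

theorem exists_leaf_eq (hT : T.IsTrivalent) {v : Fin V} (hv : T.G.degree v = 1) :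
    ∃ i, T.leaf i = v :=
  hT.2.2.2.2 v hv

theorem leaf_ne_of_degree_eq_three (hT : T.IsTrivalent) (i : Fin L) {v : Fin V}
    (hv : T.G.degree v = 3) : T.leaf i ≠ v :=
  fun h => by have := hT.degree_leaf i; rw [h, hv] at this; omega

theorem card_filter_degree_eq_three (hT : T.IsTrivalent) :
    #{v | T.G.degree v = 3} = V - L := by
  have hleaves : #{v | T.G.degree v = 1} = L := by
    rw [show univ.filter (fun v => T.G.degree v = 1) = univ.image T.leaf by
        ext v
        simp only [mem_filter, mem_univ, true_and, mem_image]
        exact ⟨hT.exists_leaf_eq, by rintro ⟨i, rfl⟩; exact hT.degree_leaf i⟩,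
      card_image_of_injective _ hT.leaf_injective, card_univ, Fintype.card_fin]
  have hinternal : #{v | T.G.degree v = 3} = #{v | ¬T.G.degree v = 1} := congrArg card <|
    filter_congr fun v _ => by have := hT.degree_eq_one_or_three v; omega
  have := card_filter_add_card_filter_not (s := univ) (fun v => T.G.degree v = 1)
  rw [card_univ, Fintype.card_fin] at this
  omega

theorem degree_eq_three_of_adj (hT : T.IsTrivalent) {v a b : Fin V} (ha : T.G.Adj v a)
    (hb : T.G.Adj v b) (hab : a ≠ b) : T.G.degree v = 3 :=
  (hT.degree_eq_one_or_three v).resolve_left fun h => hab (eq_of_adj_of_degree_eq_one h ha hb)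

theorem degree_eq_three_of_adj_leaf (hT : T.IsTrivalent) (hV : 2 < V) {i : Fin L} {w : Fin V}
    (h : T.G.Adj (T.leaf i) w) : T.G.degree w = 3 := by
  refine (hT.degree_eq_one_or_three w).resolve_left fun hw => ?_
  have := hT.connected.card_le_degree_add_degree h
    (fun z hz hzw => absurd (eq_of_adj_of_degree_eq_one (hT.degree_leaf i) hz h) hzw)
    (fun z hz hzi => absurd (eq_of_adj_of_degree_eq_one hw hz h.symm) hzi)
  rw [hT.degree_leaf, hw, Fintype.card_fin] at this
  omega

theorem degree_eq_one_of_adj_of_ne (hT : T.IsTrivalent) {x y z : Fin V} {i j : Fin L}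
    (hi : T.G.Adj (T.leaf i) x) (hj : T.G.Adj (T.leaf j) x) (hij : i ≠ j) (hy : T.G.Adj x y)
    (hyi : y ≠ T.leaf i) (hyj : y ≠ T.leaf j) (hz : T.G.Adj x z) (hzy : z ≠ y) :
    T.G.degree z = 1 := by
  have hx := hT.degree_eq_three_of_adj hi.symm hj.symm (hT.leaf_injective.ne hij)
  rcases eq_or_eq_or_eq_of_degree_eq_three hx hi.symm hj.symm hy (hT.leaf_injective.ne hij)
    hyi.symm hyj.symm hz with rfl | rfl | rfl
  · exact hT.degree_leaf i
  · exact hT.degree_leaf j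
  · exact absurd rfl hzy

theorem eq_or_eq_of_adj_leaf (hT : T.IsTrivalent) (hV : 4 < V) {v : Fin V} {i j k : Fin L}
    (hi : T.G.Adj (T.leaf i) v) (hj : T.G.Adj (T.leaf j) v) (hk : T.G.Adj (T.leaf k) v)
    (hij : i ≠ j) : k = i ∨ k = j := by
  by_contra! hne
  have := hT.connected.card_le_degree_add_degree hk.symm
    (fun z hz hzk => hT.degree_eq_one_of_adj_of_ne hi hj hij hk.symm
      (hT.leaf_injective.ne hne.1) (hT.leaf_injective.ne hne.2) hz hzk)
    (fun z hz hzv => absurd (eq_of_adj_of_degree_eq_one (hT.degree_leaf k) hz hk) hzv)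
  rw [hT.degree_eq_three_of_adj hi.symm hj.symm (hT.leaf_injective.ne hij), hT.degree_leaf,
    Fintype.card_fin] at this
  omega

theorem le_six_of_adj (hT : T.IsTrivalent) {x y : Fin V} (hxy : T.G.Adj x y) {i j k l : Fin L}
    (hi : T.G.Adj (T.leaf i) x) (hj : T.G.Adj (T.leaf j) x) (hk : T.G.Adj (T.leaf k) y)
    (hl : T.G.Adj (T.leaf l) y) (hij : i ≠ j) (hkl : k ≠ l) : V ≤ 6 := by
  have hx := hT.degree_eq_three_of_adj hi.symm hj.symm (hT.leaf_injective.ne hij)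
  have hy := hT.degree_eq_three_of_adj hk.symm hl.symm (hT.leaf_injective.ne hkl)
  have := hT.connected.card_le_degree_add_degree hxy
    (fun z hz hzy => hT.degree_eq_one_of_adj_of_ne hi hj hij hxy
      (hT.leaf_ne_of_degree_eq_three i hy).symm (hT.leaf_ne_of_degree_eq_three j hy).symm hz hzy)
    (fun z hz hzx => hT.degree_eq_one_of_adj_of_ne hk hl hkl hxy.symm
      (hT.leaf_ne_of_degree_eq_three k hx).symm (hT.leaf_ne_of_degree_eq_three l hx).symm hz hzx)
  simpa [hx, hy] using this

end PreTree.IsTrivalent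

theorem lbl_injective {n : ℕ} : Function.Injective (lbl (n := n)) :=
  fun a b h => Fin.ext (by simpa [lbl] using congrArg Fin.val h)

theorem exists_lbl_eq {n : ℕ} {i : Fin (n+3)} (hi : 3 ≤ (i : ℕ)) : ∃ m : Fin n, lbl m = i :=
  ⟨⟨i - 3, by omega⟩, Fin.ext (Nat.sub_add_cancel hi)⟩

namespace Run

variable {n : ℕ} {T : PreTree (n+3) (2*n+4)} (R : Run n T)

def IsLazy (t : Fin n) : Prop := LazyApplies T (R.lab t) (R.newE t) (R.loser t) (R.winner t)

theorem lab_eq_of_le {e : Sym2 (Fin (2*n+4))} {x : Fin (n+3)} {s t : ℕ} (hst : s ≤ t)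
    (ht : t ≤ n) (h : R.lab s e = some x) : R.lab t e = some x := by
  induction t, hst using Nat.le_induction with
  | base => exact h
  | succ t _ ih =>
    have h' := ih (by omega)
    have hne : e ≠ R.newE ⟨t, by omega⟩ := by
      rintro rfl
      exact absurd (h'.symm.trans (R.newE_unlabeled ⟨t, by omega⟩)) (Option.some_ne_none x)
    rwa [R.step_frame ⟨t, by omega⟩ e hne]

theorem lab_eq_none_of_le {e : Sym2 (Fin (2*n+4))} {s t : ℕ} (hst : s ≤ t) (ht : t ≤ n)
    (h : R.lab t e = none) : R.lab s e = none := by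
  cases hs : R.lab s e with
  | none => rfl
  | some x => simp [R.lab_eq_of_le hst ht hs] at h

theorem lab_leaf {i : Fin (n+3)} {w : Fin (2*n+4)} {t : ℕ} (ht : t ≤ n)
    (h : T.G.Adj (T.leaf i) w) : R.lab t s(T.leaf i, w) = some i :=
  R.lab_eq_of_le (Nat.zero_le t) ht (R.init_leaf i w h)

theorem exists_adj_of_lab_zero {e : Sym2 (Fin (2*n+4))} {x : Fin (n+3)}
    (h : R.lab 0 e = some x) : ∃ w, T.G.Adj (T.leaf x) w ∧ e = s(T.leaf x, w) := by
  have he : e ∈ T.G.edgeSet := by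
    by_contra he
    simp [R.init_nonedge e he] at h
  obtain ⟨i, hi⟩ : ∃ i, T.leaf i ∈ e := by
    by_contra! hi
    simp [R.init_other e hi] at h
  obtain ⟨w, hw, rfl⟩ := exists_adj_of_mem_edgeSet he hi
  obtain rfl : i = x := Option.some_inj.mp ((R.init_leaf i w hw).symm.trans h)
  exact ⟨w, hw, rfl⟩

theorem lab_zero_or_exists_newE_eq {e : Sym2 (Fin (2*n+4))} {x : Fin (n+3)} {t : ℕ}
    (ht : t ≤ n) (h : R.lab t e = some x) :
    R.lab 0 e = some x ∨ ∃ s : Fin n, s.1 < t ∧ R.newE s = e := by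
  induction t with
  | zero => exact Or.inl h
  | succ t ih =>
    by_cases hne : e = R.newE ⟨t, by omega⟩
    · exact Or.inr ⟨_, Nat.lt_succ_self t, hne.symm⟩
    · rw [R.step_frame ⟨t, by omega⟩ e hne] at h
      obtain h | ⟨s, hs, hse⟩ := ih (by omega) h
      · exact Or.inl h
      · exact Or.inr ⟨s, by omega, hse⟩

theorem lab_newE_of_lt {s : Fin n} {t : ℕ} {x : Fin (n+3)} (hs : s.1 < t) (ht : t ≤ n)
    (h : R.lab t (R.newE s) = some x) :
    (R.IsLazy s ∧ x = R.loser s) ∨ (¬R.IsLazy s ∧ x = R.winner s) := by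
  by_cases hL : R.IsLazy s
  · rw [R.lab_eq_of_le hs ht (R.step_lazy s hL)] at h
    exact Or.inl ⟨hL, (Option.some_inj.mp h).symm⟩
  · rw [R.lab_eq_of_le hs ht (R.step_nonlazy s hL)] at h
    exact Or.inr ⟨hL, (Option.some_inj.mp h).symm⟩

theorem exists_lab_succ_newE (s : Fin n) : ∃ x, R.lab (s + 1) (R.newE s) = some x := by
  by_cases hL : R.IsLazy s
  · exact ⟨_, R.step_lazy s hL⟩
  · exact ⟨_, R.step_nonlazy s hL⟩

/-- Had the newer edge been created in round `r`, its label (not the loser's) would show that round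
`r` was not lazy, while the older edge would make it lazy. -/
theorem lab_zero_of_forall_loser_lt {t : ℕ} (ht : t ≤ n) {e₁ e₂ : Sym2 (Fin (2*n+4))}
    {v : Fin (2*n+4)} {x₁ x₂ : Fin (n+3)} (he₁ : e₁ ∈ T.G.edgeSet) (he₂ : e₂ ∈ T.G.edgeSet)
    (hv₁ : v ∈ e₁) (hv₂ : v ∈ e₂) (hne : e₁ ≠ e₂) (hx : x₁ ≠ x₂)
    (h₁ : R.lab t e₁ = some x₁) (h₂ : R.lab t e₂ = some x₂)
    (hlt : ∀ r : Fin n, r.1 < t → R.loser r < x₁ ∧ R.loser r < x₂) :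
    R.lab 0 e₁ = some x₁ ∧ R.lab 0 e₂ = some x₂ := by
  induction t with
  | zero => exact ⟨h₁, h₂⟩
  | succ t ih =>
    set r : Fin n := ⟨t, by omega⟩
    have hr : ∀ {e e' : Sym2 (Fin (2*n+4))} {x x' : Fin (n+3)}, e' ∈ T.G.edgeSet → v ∈ e →
        v ∈ e' → e' ≠ e → x' ≠ x → R.lab (t+1) e = some x → R.lab t e' = some x' →
        R.loser r < x → R.loser r < x' → e ≠ R.newE r := by
      rintro e e' x x' he' hv hv' hne' hx' h h' hlx hlx' rfl
      rcases R.lab_newE_of_lt (Nat.lt_succ_self t) ht h with ⟨-, rfl⟩ | ⟨hL, rfl⟩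
      · exact lt_irrefl _ hlx
      · exact hL ⟨e', x', v, he', hv', hv, hne', h', hx', hlx'⟩
    have hlt' := hlt r (Nat.lt_succ_self t)
    have hne₁ : e₁ ≠ R.newE r := fun h => hr he₂ hv₁ hv₂ hne.symm hx.symm h₁
      ((R.step_frame r e₂ (h ▸ hne.symm)).symm.trans h₂) hlt'.1 hlt'.2 h
    have hne₂ : e₂ ≠ R.newE r := fun h => hr he₁ hv₂ hv₁ hne hx h₂
      ((R.step_frame r e₁ (h ▸ hne)).symm.trans h₁) hlt'.2 hlt'.1 h
    exact ih (by omega) ((R.step_frame r e₁ hne₁).symm.trans h₁)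
      ((R.step_frame r e₂ hne₂).symm.trans h₂) fun r' hr' => hlt r' (by omega)

theorem degree_vtx (hT : T.IsTrivalent) (t : Fin n) : T.G.degree (R.vtx t) = 3 := by
  obtain ⟨a, ha, hla⟩ := exists_adj_of_mem_edgeSet (R.loserE_mem t) (R.vtx_mem t).1
  obtain ⟨b, hb, hwb⟩ := exists_adj_of_mem_edgeSet (R.winnerE_mem t) (R.vtx_mem t).2.1
  exact hT.degree_eq_three_of_adj ha hb fun hab => (R.edges_distinct t).1 (by rw [hla, hwb, hab])

theorem vtx_ne_leaf (hT : T.IsTrivalent) (t : Fin n) (i : Fin (n+3)) : R.vtx t ≠ T.leaf i :=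
  (hT.leaf_ne_of_degree_eq_three i (R.degree_vtx hT t)).symm

theorem eq_or_eq_or_eq_of_vtx_mem (hT : T.IsTrivalent) (t : Fin n) {e : Sym2 (Fin (2*n+4))}
    (he : e ∈ T.G.edgeSet) (hv : R.vtx t ∈ e) :
    e = R.loserE t ∨ e = R.winnerE t ∨ e = R.newE t := by
  obtain ⟨a, ha, hla⟩ := exists_adj_of_mem_edgeSet (R.loserE_mem t) (R.vtx_mem t).1
  obtain ⟨b, hb, hwb⟩ := exists_adj_of_mem_edgeSet (R.winnerE_mem t) (R.vtx_mem t).2.1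
  obtain ⟨c, hc, hnc⟩ := exists_adj_of_mem_edgeSet (R.newE_mem t) (R.vtx_mem t).2.2
  obtain ⟨hlw, hln, hwn⟩ := R.edges_distinct t
  obtain ⟨z, hz, rfl⟩ := exists_adj_of_mem_edgeSet he hv
  rcases eq_or_eq_or_eq_of_degree_eq_three (R.degree_vtx hT t) ha hb hc
    (by rintro rfl; exact hlw (hla.trans hwb.symm)) (by rintro rfl; exact hln (hla.trans hnc.symm))
    (by rintro rfl; exact hwn (hwb.trans hnc.symm)) hz with rfl | rfl | rfl
  · exact Or.inl hla.symm
  · exact Or.inr (Or.inl hwb.symm)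
  · exact Or.inr (Or.inr hnc.symm)

theorem eq_loser_or_eq_winner_of_vtx_mem (hT : T.IsTrivalent) (t : Fin n)
    {e : Sym2 (Fin (2*n+4))} {x : Fin (n+3)} (he : e ∈ T.G.edgeSet) (hv : R.vtx t ∈ e)
    (h : R.lab t e = some x) : x = R.loser t ∨ x = R.winner t := by
  rcases R.eq_or_eq_or_eq_of_vtx_mem hT t he hv with rfl | rfl | rfl
  · exact Or.inl (Option.some_inj.mp (h.symm.trans (R.lab_loserE t)))
  · exact Or.inr (Option.some_inj.mp (h.symm.trans (R.lab_winnerE t)))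
  · exact absurd (h.symm.trans (R.newE_unlabeled t)) (Option.some_ne_none x)

theorem eq_loser_or_eq_winner_of_adj_vtx (hT : T.IsTrivalent) {t : Fin n} {i : Fin (n+3)}
    (h : T.G.Adj (T.leaf i) (R.vtx t)) : i = R.loser t ∨ i = R.winner t :=
  R.eq_loser_or_eq_winner_of_vtx_mem hT t h (Sym2.mem_mk_right _ _) (R.lab_leaf t.2.le h)

/-- After round `s` all three edges at `vtx s` are labeled, while `newE t` is not yet. -/
theorem vtx_injective (hT : T.IsTrivalent) : Function.Injective R.vtx := by
  refine Function.Injective.of_lt_imp_ne fun s t hst h => ?_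
  have hlabeled : ∃ x, R.lab t (R.newE t) = some x := by
    rcases R.eq_or_eq_or_eq_of_vtx_mem hT s (R.newE_mem t) (h ▸ (R.vtx_mem t).2.2)
      with h' | h' | h'
    · exact ⟨_, R.lab_eq_of_le hst.le t.2.le (h' ▸ R.lab_loserE s)⟩
    · exact ⟨_, R.lab_eq_of_le hst.le t.2.le (h' ▸ R.lab_winnerE s)⟩
    · obtain ⟨x, hx⟩ := R.exists_lab_succ_newE s
      exact ⟨x, R.lab_eq_of_le hst t.2.le (h' ▸ hx)⟩
  obtain ⟨x, hx⟩ := hlabeled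
  exact absurd (hx.symm.trans (R.newE_unlabeled t)) (Option.some_ne_none x)

theorem adj_of_lab_zero_of_vtx_mem (hT : T.IsTrivalent) {t : Fin n} {e : Sym2 (Fin (2*n+4))}
    {i : Fin (n+3)} (h : R.lab 0 e = some i) (hv : R.vtx t ∈ e) :
    T.G.Adj (T.leaf i) (R.vtx t) ∧ e = s(T.leaf i, R.vtx t) := by
  obtain ⟨w, hw, rfl⟩ := R.exists_adj_of_lab_zero h
  obtain rfl := (Sym2.mem_iff.mp hv).resolve_left (R.vtx_ne_leaf hT t i)
  exact ⟨hw, rfl⟩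

theorem eq_of_lab_zero_of_vtx_mem (hT : T.IsTrivalent) {s t : Fin n} {e e' : Sym2 (Fin (2*n+4))}
    {i : Fin (n+3)} (he : R.lab 0 e = some i) (he' : R.lab 0 e' = some i) (hs : R.vtx s ∈ e)
    (ht : R.vtx t ∈ e') : s = t :=
  R.vtx_injective hT (eq_of_adj_of_degree_eq_one (hT.degree_leaf i)
    (R.adj_of_lab_zero_of_vtx_mem hT he hs).1 (R.adj_of_lab_zero_of_vtx_mem hT he' ht).1)

theorem wins_eq_zero_iff (i : Fin (n+3)) : R.wins i = 0 ↔ ∀ t, R.winner t ≠ i := by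
  simp [Run.wins, filter_eq_empty_iff]

theorem wins_winner_eq_one_iff (s : Fin n) :
    R.wins (R.winner s) = 1 ↔ ∀ t, R.winner t = R.winner s → t = s := by
  rw [Run.wins, card_eq_one]
  constructor
  · rintro ⟨a, ha⟩ t ht
    have hs : s ∈ ({a} : Finset (Fin n)) := ha ▸ by simp
    have ht : t ∈ ({a} : Finset (Fin n)) := ha ▸ by simp [ht]
    rw [mem_singleton.mp hs, mem_singleton.mp ht]
  · intro h
    exact ⟨s, by ext t; simpa using ⟨h t, by rintro rfl; rfl⟩⟩

theorem sum_wins : ∑ i, R.wins i = n := by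
  simpa [Run.wins] using
    (card_eq_sum_card_fiberwise (f := R.winner) (s := univ) (t := univ) (by simp)).symm

theorem three_le_winner (h : ∑ m, R.wins (lbl m) = n) (t : Fin n) : 3 ≤ (R.winner t : ℕ) := by
  by_contra! hlt
  have hnot : R.winner t ∉ univ.image lbl := by
    simp only [mem_image, mem_univ, true_and, not_exists]
    rintro m hm
    simp [← hm, lbl] at hlt
  have hpos : 0 < R.wins (R.winner t) := card_pos.mpr ⟨t, by simp⟩
  have hle :=
    sum_le_sum_of_subset (f := R.wins) (subset_univ (insert (R.winner t) (univ.image lbl)))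
  rw [sum_insert hnot, sum_image fun a _ b _ hab => lbl_injective hab, h, R.sum_wins] at hle
  omega

theorem vtx_ne_of_adj_leaf_zero_one (hT : T.IsTrivalent) (hwin : ∀ t, R.winner t ≠ 1)
    {v : Fin (2*n+4)} (h₀ : T.G.Adj (T.leaf 0) v) (h₁ : T.G.Adj (T.leaf 1) v) (t : Fin n) :
    R.vtx t ≠ v := by
  rintro rfl
  have hlw := R.lt_lw t
  rcases R.eq_loser_or_eq_winner_of_adj_vtx hT h₁ with h₁ | h₁
  · rcases R.eq_loser_or_eq_winner_of_adj_vtx hT h₀ with h₀ | h₀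
    · exact absurd (h₀.trans h₁.symm) (by simp)
    · exact absurd (h₀ ▸ hlw) (Fin.not_lt_zero _)
  · exact hwin t h₁.symm

theorem exists_vtx_eq (hT : T.IsTrivalent) (hwin : ∀ t, R.winner t ≠ 1) {v₁ : Fin (2*n+4)}
    (h₀ : T.G.Adj (T.leaf 0) v₁) (h₁ : T.G.Adj (T.leaf 1) v₁) {v : Fin (2*n+4)}
    (hv : T.G.degree v = 3) (hne : v ≠ v₁) : ∃ t, R.vtx t = v := by
  have hv₁ : v₁ ∈ ({w | T.G.degree w = 3} : Finset (Fin (2*n+4))) := by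
    simpa using hT.degree_eq_three_of_adj h₀.symm h₁.symm (hT.leaf_injective.ne (by simp))
  have hsub : univ.image R.vtx ⊆ ({w | T.G.degree w = 3} : Finset _).erase v₁ := by
    intro w hw
    obtain ⟨t, -, rfl⟩ := mem_image.mp hw
    simp [R.degree_vtx hT, R.vtx_ne_of_adj_leaf_zero_one hT hwin h₀ h₁]
  have heq := eq_of_subset_of_card_le hsub (by
    rw [card_erase_of_mem hv₁, hT.card_filter_degree_eq_three,
      card_image_of_injective _ (R.vtx_injective hT)]
    simp only [card_univ, Fintype.card_fin]
    omega)
  have hmem : v ∈ univ.image R.vtx := heq ▸ by simp [hv, hne]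
  simpa using hmem

theorem loser_le_loser_zero (hn : 0 < n) (t : Fin n) :
    R.loser t ≤ R.loser ⟨0, hn⟩ := by
  induction t using WellFoundedLT.induction with
  | ind t ih =>
  by_contra! hlt
  have hlw := R.lt_lw t
  obtain ⟨hvl, hvw, hvn⟩ := R.vtx_mem t
  obtain ⟨hlw', hln, hwn⟩ := R.edges_distinct t
  obtain ⟨h₁, h₂⟩ := R.lab_zero_of_forall_loser_lt t.2.le (R.loserE_mem t) (R.winnerE_mem t)
    hvl hvw hlw' hlw.ne (R.lab_loserE t) (R.lab_winnerE t)
    fun r hr => ⟨(ih r hr).trans_lt hlt, ((ih r hr).trans_lt hlt).trans hlw⟩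
  exact hlt.not_ge (R.max_rule ⟨0, hn⟩ _ _ _ _ _ _ (R.loserE_mem t) (R.winnerE_mem t)
    (R.newE_mem t) h₁ h₂ (R.lab_eq_none_of_le (Nat.zero_le _) t.2.le (R.newE_unlabeled t))
    hlw hvl hvw hvn hlw' hln hwn)

/-- A lazily labeled edge never wins: the edge that made its round lazy meets it again at the
far vertex with a larger label. -/
theorem lab_zero_winnerE_or_exists (hT : T.IsTrivalent) (t : Fin n) :
    R.lab 0 (R.winnerE t) = some (R.winner t) ∨
      ∃ s < t, ¬R.IsLazy s ∧ R.winner s = R.winner t := by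
  rcases R.lab_zero_or_exists_newE_eq t.2.le (R.lab_winnerE t) with h | ⟨s, hst, hs⟩
  · exact Or.inl h
  rcases R.lab_newE_of_lt hst t.2.le (hs ▸ R.lab_winnerE t) with ⟨hL, heq⟩ | ⟨hL, heq⟩
  · obtain ⟨e, u, v, he, hve, hvE, hne, hu, huw, hlu⟩ := hL
    have hvs : v ≠ R.vtx s := by
      rintro rfl
      rcases R.eq_loser_or_eq_winner_of_vtx_mem hT s he hve hu with rfl | rfl
      exacts [lt_irrefl _ hlu, huw rfl]
    have hvt : v = R.vtx t := by
      have hsv := (Sym2.mem_and_mem_iff hvs.symm).mp ⟨(R.vtx_mem s).2.2, hvE⟩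
      have hst' := (Sym2.mem_and_mem_iff ((R.vtx_injective hT).ne (Fin.ne_of_val_ne hst.ne))).mp
        ⟨(R.vtx_mem s).2.2, hs ▸ (R.vtx_mem t).2.1⟩
      exact Sym2.congr_right.mp (hsv.symm.trans hst')
    subst hvt
    rcases R.eq_loser_or_eq_winner_of_vtx_mem hT t he hve (R.lab_eq_of_le hst.le t.2.le hu)
      with rfl | rfl
    · exact absurd ((R.lt_lw t).trans_eq heq) (lt_asymm hlu)
    · exact absurd heq hlu.ne'
  · exact Or.inr ⟨s, hst, hL, heq.symm⟩

theorem winner_ne_loser_zero (hT : T.IsTrivalent) (hn : 0 < n) (t : Fin n) :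
    R.winner t ≠ R.loser ⟨0, hn⟩ := by
  induction t using WellFoundedLT.induction with
  | ind t ih =>
  intro h
  rcases R.lab_zero_winnerE_or_exists hT t with h0 | ⟨s, hst, -, hs⟩
  · obtain rfl := R.eq_of_lab_zero_of_vtx_mem hT (h ▸ h0) (R.lab_loserE ⟨0, hn⟩)
      (R.vtx_mem t).2.1 (R.vtx_mem _).1
    exact (R.lt_lw _).ne' h
  · exact ih s hst (hs.trans h)

theorem wins_winner_zero_of_isLazy (hT : T.IsTrivalent) (hn : 0 < n) (hL : R.IsLazy ⟨0, hn⟩) :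
    R.wins (R.winner ⟨0, hn⟩) = 1 := by
  rw [wins_winner_eq_one_iff]
  intro t h
  induction t using WellFoundedLT.induction with
  | ind t ih =>
  rcases R.lab_zero_winnerE_or_exists hT t with h0 | ⟨s, hst, hs, hws⟩
  · exact R.eq_of_lab_zero_of_vtx_mem hT (h ▸ h0) (R.lab_winnerE ⟨0, hn⟩)
      (R.vtx_mem t).2.1 (R.vtx_mem _).2.1
  · obtain rfl := ih s hst (hws.trans h)
    exact absurd hL hs

theorem le_loser_zero_of_forall_winner_ne (hT : T.IsTrivalent) (hn : 0 < n)
    (hwin : ∀ t, R.winner t ≠ 1) {v₁ : Fin (2*n+4)} (h₀ : T.G.Adj (T.leaf 0) v₁)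
    (h₁ : T.G.Adj (T.leaf 1) v₁) {i : Fin (n+3)} (hi₀ : i ≠ 0) (hi₁ : i ≠ 1)
    (hi : ∀ t, R.winner t ≠ i) : i ≤ R.loser ⟨0, hn⟩ := by
  obtain ⟨w, hw⟩ := (T.G.degree_pos_iff_exists_adj (T.leaf i)).mp (hT.degree_leaf i ▸ one_pos)
  have hwv₁ : w ≠ v₁ := by
    rintro rfl
    rcases hT.eq_or_eq_of_adj_leaf (by omega) h₀ h₁ hw (by simp) with rfl | rfl
    exacts [hi₀ rfl, hi₁ rfl]
  obtain ⟨t, rfl⟩ :=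
    R.exists_vtx_eq hT hwin h₀ h₁ (hT.degree_eq_three_of_adj_leaf (by omega) hw) hwv₁
  rcases R.eq_loser_or_eq_winner_of_adj_vtx hT hw with rfl | h
  · exact R.loser_le_loser_zero hn t
  · exact absurd h.symm (hi t)

theorem exists_ne_vtx_mem_newE_zero (hT : T.IsTrivalent) (hn : 2 ≤ n)
    (hwin : ∀ t, R.winner t ≠ 1) {v₁ : Fin (2*n+4)} (h₀ : T.G.Adj (T.leaf 0) v₁)
    (h₁ : T.G.Adj (T.leaf 1) v₁) : ∃ t, t ≠ ⟨0, by omega⟩ ∧ R.vtx t ∈ R.newE ⟨0, by omega⟩ := by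
  set t₀ : Fin n := ⟨0, by omega⟩
  obtain ⟨w, hw, hE⟩ := exists_adj_of_mem_edgeSet (R.newE_mem t₀) (R.vtx_mem t₀).2.2
  obtain ⟨hℓ, hℓE⟩ := R.adj_of_lab_zero_of_vtx_mem hT (R.lab_loserE t₀) (R.vtx_mem t₀).1
  obtain ⟨hj, hjE⟩ := R.adj_of_lab_zero_of_vtx_mem hT (R.lab_winnerE t₀) (R.vtx_mem t₀).2.1
  have hw₃ : T.G.degree w = 3 := by
    refine (hT.degree_eq_one_or_three w).resolve_left fun hw₁ => ?_
    obtain ⟨k, rfl⟩ := hT.exists_leaf_eq hw₁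
    rcases hT.eq_or_eq_of_adj_leaf (by omega) hℓ hj hw.symm (R.lt_lw t₀).ne with rfl | rfl
    · exact (R.edges_distinct t₀).2.1 (hℓE.trans (hE.trans Sym2.eq_swap).symm)
    · exact (R.edges_distinct t₀).2.2 (hjE.trans (hE.trans Sym2.eq_swap).symm)
  have hwv₁ : w ≠ v₁ := by
    rintro rfl
    have := hT.le_six_of_adj hw hℓ hj h₀ h₁ (R.lt_lw t₀).ne (by simp)
    omega
  obtain ⟨t, rfl⟩ := R.exists_vtx_eq hT hwin h₀ h₁ hw₃ hwv₁
  exact ⟨t, fun h => hw.ne (congrArg R.vtx h.symm), hE ▸ Sym2.mem_mk_right _ _⟩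

theorem isLazy_zero_of_wins_eq_one (hT : T.IsTrivalent) (hn : 2 ≤ n)
    (hwin : ∀ t, R.winner t ≠ 1) {v₁ : Fin (2*n+4)} (h₀ : T.G.Adj (T.leaf 0) v₁)
    (h₁ : T.G.Adj (T.leaf 1) v₁) (h : R.wins (R.winner ⟨0, by omega⟩) = 1) :
    R.IsLazy ⟨0, by omega⟩ := by
  by_contra hL
  obtain ⟨t, ht, hv⟩ := R.exists_ne_vtx_mem_newE_zero hT hn hwin h₀ h₁
  have hlab := R.lab_eq_of_le (Nat.pos_of_ne_zero fun h0 => ht (Fin.ext h0)) t.2.le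
    (R.step_nonlazy _ hL)
  rcases R.eq_loser_or_eq_winner_of_vtx_mem hT t (R.newE_mem _) hv hlab with h' | h'
  · exact (R.lt_lw _).not_ge (h'.trans_le (R.loser_le_loser_zero (by omega) t))
  · exact ht ((R.wins_winner_eq_one_iff _).mp h t h'.symm)

end Run

/-- **First Round Lemma.** For `T ∈ Tour(k)`: (1) the loser of the first round
is the largest index in `{c,1,…,n}` whose `k`-value is `0` (with `k_c = 0` by convention,
`c` being `2 : Fin (n+3)`); (2) the laziness rule applies in the first round iff the winner's
part equals `1` and `n ≥ 2`. -/
theorem first_round (n : ℕ) (hn : 1 ≤ n) (k : Fin n → ℕ) (hk : ∑ m, k m = n)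
    (T : PreTree (n+3) (2*n+4)) (hT : T.IsTrivalent) (hab : T.ABAdj)
    (R : Run n T) (hR : ∀ m : Fin n, R.wins (lbl m) = k m) :
    ((R.loser ⟨0, hn⟩ = (2 : Fin (n+3)) ∨ ∃ m : Fin n, R.loser ⟨0, hn⟩ = lbl m ∧ k m = 0) ∧
      (∀ m : Fin n, k m = 0 → lbl m ≤ R.loser ⟨0, hn⟩)) ∧
    (LazyApplies T (R.lab 0) (R.newE ⟨0, hn⟩) (R.loser ⟨0, hn⟩) (R.winner ⟨0, hn⟩) ↔
      ((∃ m : Fin n, R.winner ⟨0, hn⟩ = lbl m ∧ k m = 1) ∧ 2 ≤ n)) := by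
  obtain ⟨v₁, h₀, h₁⟩ := hab
  have h₃ : ∀ t, 3 ≤ (R.winner t : ℕ) := R.three_le_winner (by simp [hR, hk])
  have hwin : ∀ i : Fin (n+3), (i : ℕ) < 3 → ∀ t, R.winner t ≠ i :=
    fun i hi t h => (h₃ t).not_gt (h ▸ hi)
  have hle : ∀ i : Fin (n+3), 2 ≤ (i : ℕ) → (∀ t, R.winner t ≠ i) → i ≤ R.loser ⟨0, hn⟩ :=
    fun i hi => R.le_loser_zero_of_forall_winner_ne hT hn (hwin 1 (by simp)) h₀ h₁
      (by rintro rfl; simp at hi) (by rintro rfl; simp at hi)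
  have hk₀ : ∀ m, k m = 0 ↔ ∀ t, R.winner t ≠ lbl m := fun m => by rw [← hR m, R.wins_eq_zero_iff]
  have h₂ : 2 ≤ (R.loser ⟨0, hn⟩ : ℕ) :=
    hle 2 le_rfl (hwin 2 ((Nat.mod_le 2 _).trans_lt (by norm_num)))
  obtain ⟨m, hm⟩ := exists_lbl_eq (h₃ ⟨0, hn⟩)
  refine ⟨⟨?_, fun m hm => hle _ (by simp [lbl]) ((hk₀ m).mp hm)⟩,
    ⟨fun hL => ⟨⟨m, hm.symm, ?_⟩, ?_⟩, ?_⟩⟩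
  · rcases h₂.eq_or_lt with h | h
    · exact Or.inl (Fin.ext h.symm)
    · obtain ⟨m, hm⟩ := exists_lbl_eq h
      exact Or.inr ⟨m, hm.symm, (hk₀ m).mpr (hm ▸ R.winner_ne_loser_zero hT hn)⟩
  · rw [← hR m, hm]
    exact R.wins_winner_zero_of_isLazy hT hn hL
  · obtain ⟨-, u, -, -, -, -, -, -, hu, hlu⟩ := hL
    have := Fin.val_ne_of_ne hu
    have := h₃ ⟨0, hn⟩
    omega
  · rintro ⟨⟨m', hm', hk'⟩, hn₂⟩
    exact R.isLazy_zero_of_wins_eq_one hT hn₂ (hwin 1 (by simp)) h₀ h₁ (by rw [hm', hR m', hk'])
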